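/- (Proposition 2: linear-system characterization of first-order identifiability.) Fix m ≥ 1 and θ ∈ Θ_{c_0}. For x = (x_1,…,x_m) ∈ [V]^m, i ∈ [m] and j ∈ [K], define ξ(i,j;θ,x) = ∫ h_j Π_{i′ ≠ i} p_{θ,h}(x_{i′}) dν_0(h). Then 𝔡_{m,1}(θ) > 0 if and only if the only δ = (δ_{jk})_{j∈[K],k∈[V]} ∈ ℝ^{K×V} satisfying both (i) Σ_{i=1}^m Σ_{j=1}^K ξ(i,j;θ,x) δ_{j, x_i} = 0 for every x ∈ [V]^m, and (ii) Σ_{k=1}^V δ_{jk} = 0 for every j ∈ [K], is δ = 0. -/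
import Mathlib


open MeasureTheory Filter

noncomputable section

namespace TopicModel

/-- The probability simplex in `ℝ^K`. -/
def simplex (K : ℕ) : Set (Fin K → ℝ) := {h | (∀ k, 0 ≤ h k) ∧ ∑ k, h k = 1}

/-- The parameter set `Θ_{c₀}`: `K` topic vectors, each a probability vector on `[V]`
with all entries at least `c₀`. -/
def Theta (c0 : ℝ) (V K : ℕ) : Set (Fin K → Fin V → ℝ) :=
  {θ | (∀ k ℓ, c0 ≤ θ k ℓ) ∧ ∀ k, ∑ ℓ, θ k ℓ = 1}

/-- `θ` is a tuple of probability vectors. -/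
def IsParam {V K : ℕ} (θ : Fin K → Fin V → ℝ) : Prop :=
  (∀ k ℓ, 0 ≤ θ k ℓ) ∧ ∀ k, ∑ ℓ, θ k ℓ = 1

/-- Word probability `p_{θ,h}(v) = Σ_k h_k θ_k(v)`. -/
def pWord {V K : ℕ} (θ : Fin K → Fin V → ℝ) (h : Fin K → ℝ) (v : Fin V) : ℝ :=
  ∑ k, h k * θ k v

/-- Document probability given mixing vector `h`: `p_{θ,h}(x) = Π_i p_{θ,h}(x_i)`. -/
def pDoc {V K : ℕ} (m : ℕ) (θ : Fin K → Fin V → ℝ) (h : Fin K → ℝ)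
    (x : Fin m → Fin V) : ℝ :=
  ∏ i, pWord θ h (x i)

/-- Marginal document probability `p_{θ,m}(x) = ∫ p_{θ,h}(x) dν₀(h)`. -/
def pM {V K : ℕ} (ν0 : Measure (Fin K → ℝ)) (m : ℕ) (θ : Fin K → Fin V → ℝ)
    (x : Fin m → Fin V) : ℝ :=
  ∫ h, pDoc m θ h x ∂ν0

/-- `ℓ¹`-norm of a `K × V` array: `‖δ‖₁ = Σ_k Σ_ℓ |δ_k(ℓ)|`. -/
def norm1 {V K : ℕ} (δ : Fin K → Fin V → ℝ) : ℝ := ∑ k, ∑ ℓ, |δ k ℓ|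

/-- Wasserstein distance between parameters:
`d_W(θ,θ') = min_π Σ_k ‖θ_k − θ'_{π(k)}‖₁`. -/
def dW {V K : ℕ} (θ θ' : Fin K → Fin V → ℝ) : ℝ :=
  ⨅ π : Equiv.Perm (Fin K), ∑ k, ∑ ℓ, |θ k ℓ - θ' (π k) ℓ|

/-- `L¹` distance between the document pmfs of two parameters. -/
def distL1 {V K : ℕ} (ν0 : Measure (Fin K → ℝ)) (m : ℕ)
    (θ θ' : Fin K → Fin V → ℝ) : ℝ :=
  ∑ x : Fin m → Fin V, |pM ν0 m θ x - pM ν0 m θ' x|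

/-- The `p`-th order degeneracy criterion `𝔡_{m,p}(θ)`: the infimum over all
`δ` with `‖δ‖₁ = 1` and `Σ_ℓ δ_k(ℓ) = 0` for every `k`, of
`Σ_{x ∈ [V]^m} |∫ p_{θ,h}(x) Σ_{i₁<⋯<i_p} Π_t (δ_h(x_{i_t}) / p_{θ,h}(x_{i_t})) dν₀|`. -/
def degen {V K : ℕ} (ν0 : Measure (Fin K → ℝ)) (m : ℕ) (θ : Fin K → Fin V → ℝ)
    (p : ℕ) : ℝ :=
  sInf {r : ℝ | ∃ δ : Fin K → Fin V → ℝ, norm1 δ = 1 ∧ (∀ k, ∑ ℓ, δ k ℓ = 0) ∧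
    r = ∑ x : Fin m → Fin V,
      |∫ h, pDoc m θ h x *
        ∑ S ∈ Finset.powersetCard p (Finset.univ : Finset (Fin m)),
          ∏ i ∈ S, ((∑ k, h k * δ k (x i)) / pWord θ h (x i)) ∂ν0|}

/-- The order of degeneracy `𝔭(m;θ) ∈ ℕ ∪ {∞}`:
the least `p ∈ {1,…,m}` with `𝔡_{m,p}(θ) > 0`, or `∞` if none exists. -/
def pOrder {V K : ℕ} (ν0 : Measure (Fin K → ℝ)) (m : ℕ) (θ : Fin K → Fin V → ℝ) : ℕ∞ :=
  sInf ((↑) '' {p : ℕ | 1 ≤ p ∧ p ≤ m ∧ 0 < degen ν0 m θ p})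

/-- Assumption (A2) on the mixing measure `ν₀`: a Borel probability measure supported on the
simplex, exchangeable, with `E[h₁²] > E[h₁h₂]` and (when `K ≥ 3`)
`E[h₁³] + 2E[h₁h₂h₃] > 3E[h₁²h₂]`. -/
structure NiceMixing (K : ℕ) (ν0 : Measure (Fin K → ℝ)) : Prop where
  prob : IsProbabilityMeasure ν0
  support : ν0 (simplex K)ᶜ = 0
  exch : ∀ π : Equiv.Perm (Fin K), Measure.map (fun h => h ∘ π) ν0 = ν0
  mom2 : ∀ i j : Fin K, i ≠ j → ∫ h, h i * h j ∂ν0 < ∫ h, h i ^ 2 ∂ν0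
  mom3 : ∀ i j k : Fin K, i ≠ j → j ≠ k → i ≠ k →
    3 * ∫ h, h i ^ 2 * h j ∂ν0 < ∫ h, h i ^ 3 ∂ν0 + 2 * ∫ h, h i * h j * h k ∂ν0

/-- The equivalence class `Θ̃_{c₀}(θ)` of parameters inducing the same document pmf as `θ`. -/
def equivClass {V K : ℕ} (ν0 : Measure (Fin K → ℝ)) (m : ℕ) (c0 : ℝ)
    (θ : Fin K → Fin V → ℝ) : Set (Fin K → Fin V → ℝ) :=
  {θ' | θ' ∈ Theta c0 V K ∧ ∀ x : Fin m → Fin V, pM ν0 m θ' x = pM ν0 m θ x}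

/-- Probability of the event `A` under `n` i.i.d. draws from the pmf `p` on a finite set. -/
def prodProb {α : Type*} [Fintype α] (p : α → ℝ) (n : ℕ) (A : Set (Fin n → α)) : ℝ :=
  ∑ xs : Fin n → α, A.indicator (fun ys => ∏ i, p (ys i)) xs

end TopicModel

namespace TopicModel

section Aux

variable {V K m : ℕ} {c0 : ℝ}

lemma norm1_nonneg (δ : Fin K → Fin V → ℝ) : 0 ≤ norm1 δ :=
  Finset.sum_nonneg fun _ _ => Finset.sum_nonneg fun _ _ => abs_nonneg _

lemma norm1_eq_zero {δ : Fin K → Fin V → ℝ} (h : norm1 δ = 0) : δ = 0 := by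
  funext k ℓ
  have h1 : ∀ k ∈ Finset.univ, (0:ℝ) ≤ ∑ ℓ, |δ k ℓ| :=
    fun _ _ => Finset.sum_nonneg fun _ _ => abs_nonneg _
  have h2 := (Finset.sum_eq_zero_iff_of_nonneg h1).1 h k (Finset.mem_univ k)
  have h3 := (Finset.sum_eq_zero_iff_of_nonneg (fun _ _ => abs_nonneg _)).1 h2 ℓ
    (Finset.mem_univ ℓ)
  simpa [abs_eq_zero] using h3

lemma abs_le_norm1 (δ : Fin K → Fin V → ℝ) (k : Fin K) (ℓ : Fin V) : |δ k ℓ| ≤ norm1 δ := by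
  calc |δ k ℓ| ≤ ∑ ℓ', |δ k ℓ'| :=
        Finset.single_le_sum (f := fun ℓ' => |δ k ℓ'|)
          (fun _ _ => abs_nonneg _) (Finset.mem_univ ℓ)
    _ ≤ ∑ k', ∑ ℓ', |δ k' ℓ'| := Finset.single_le_sum
        (f := fun k' => ∑ ℓ', |δ k' ℓ'|)
        (fun (k' : Fin K) _ => Finset.sum_nonneg fun _ _ => abs_nonneg _) (Finset.mem_univ k)
    _ = norm1 δ := rfl

lemma norm1_smul (c : ℝ) (δ : Fin K → Fin V → ℝ) : norm1 (c • δ) = |c| * norm1 δ := by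
  simp [norm1, abs_mul, Finset.mul_sum]

lemma pWord_ge_of_mem {θ : Fin K → Fin V → ℝ} (hθ : θ ∈ Theta c0 V K)
    {h : Fin K → ℝ} (hh : h ∈ simplex K) (v : Fin V) : c0 ≤ pWord θ h v := by
  calc c0 = ∑ k, h k * c0 := by rw [← Finset.sum_mul, hh.2, one_mul]
    _ ≤ pWord θ h v :=
      Finset.sum_le_sum fun k _ => mul_le_mul_of_nonneg_left (hθ.1 k v) (hh.1 k)

lemma pWord_le_one_of_mem {θ : Fin K → Fin V → ℝ} (hθ : θ ∈ Theta c0 V K) (hc0 : 0 < c0)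
    {h : Fin K → ℝ} (hh : h ∈ simplex K) (v : Fin V) : pWord θ h v ≤ 1 := by
  calc pWord θ h v ≤ ∑ k, h k * 1 := by
        refine Finset.sum_le_sum fun k _ => mul_le_mul_of_nonneg_left ?_ (hh.1 k)
        have h1 : θ k v ≤ ∑ ℓ, θ k ℓ :=
          Finset.single_le_sum (fun ℓ _ => le_trans hc0.le (hθ.1 k ℓ)) (Finset.mem_univ v)
        rwa [hθ.2 k] at h1
    _ = 1 := by rw [← Finset.sum_mul, hh.2, one_mul]

lemma pWord_continuous (θ : Fin K → Fin V → ℝ) (v : Fin V) :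
    Continuous fun h : Fin K → ℝ => pWord θ h v := by
  unfold pWord
  exact continuous_finset_sum _ fun k _ => (continuous_apply k).mul continuous_const

lemma key_integral (ν0 : Measure (Fin K → ℝ)) [IsProbabilityMeasure ν0]
    (hsupp : ν0 (simplex K)ᶜ = 0) (θ : Fin K → Fin V → ℝ) (hθ : θ ∈ Theta c0 V K)
    (hc0 : 0 < c0) (δ : Fin K → Fin V → ℝ) (x : Fin m → Fin V) :
    ∫ h, pDoc m θ h x *
        ∑ S ∈ Finset.powersetCard 1 (Finset.univ : Finset (Fin m)),
          ∏ i ∈ S, ((∑ k, h k * δ k (x i)) / pWord θ h (x i)) ∂ν0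
    = ∑ i : Fin m, ∑ j : Fin K,
        (∫ h, h j * ∏ i' ∈ ({i} : Finset (Fin m))ᶜ, pWord θ h (x i') ∂ν0) * δ j (x i) := by
  have hae : ∀ᵐ h ∂ν0, h ∈ simplex K := by
    rw [MeasureTheory.ae_iff]
    exact hsupp
  set g : Fin m → Fin K → (Fin K → ℝ) → ℝ :=
    fun i j h => h j * ∏ i' ∈ ({i} : Finset (Fin m))ᶜ, pWord θ h (x i') with hgdef
  have hgc : ∀ i j, Continuous (g i j) := fun i j =>
    (continuous_apply j).mul (continuous_finset_prod _ fun i' _ => pWord_continuous θ (x i'))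
  have hgint : ∀ i j, Integrable (g i j) ν0 := by
    intro i j
    refine Integrable.mono' (integrable_const 1) ((hgc i j).aestronglyMeasurable) ?_
    filter_upwards [hae] with h hh
    have h1 : |h j| ≤ 1 := by
      rw [abs_of_nonneg (hh.1 j)]
      calc h j ≤ ∑ k, h k := Finset.single_le_sum (fun k _ => hh.1 k) (Finset.mem_univ j)
        _ = 1 := hh.2
    have h2 : |∏ i' ∈ ({i} : Finset (Fin m))ᶜ, pWord θ h (x i')| ≤ 1 := by
      rw [Finset.abs_prod]
      refine Finset.prod_le_one (fun _ _ => abs_nonneg _) fun i' _ => ?_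
      rw [abs_of_nonneg (le_trans hc0.le (pWord_ge_of_mem hθ hh _))]
      exact pWord_le_one_of_mem hθ hc0 hh _
    calc ‖g i j h‖ = |h j| * |∏ i' ∈ ({i} : Finset (Fin m))ᶜ, pWord θ h (x i')| := by
          rw [Real.norm_eq_abs, hgdef, abs_mul]
      _ ≤ 1 * 1 := mul_le_mul h1 h2 (abs_nonneg _) zero_le_one
      _ = 1 := one_mul 1
  have heq : (fun h => pDoc m θ h x *
        ∑ S ∈ Finset.powersetCard 1 (Finset.univ : Finset (Fin m)),
          ∏ i ∈ S, ((∑ k, h k * δ k (x i)) / pWord θ h (x i)))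
      =ᵐ[ν0] fun h => ∑ i : Fin m, ∑ j : Fin K, δ j (x i) * g i j h := by
    filter_upwards [hae] with h hh
    simp only [Finset.powersetCard_one, Finset.sum_map, Function.Embedding.coeFn_mk,
      Finset.prod_singleton, Finset.mul_sum]
    refine Finset.sum_congr rfl fun i _ => ?_
    have hpos : pWord θ h (x i) ≠ 0 :=
      ne_of_gt (lt_of_lt_of_le hc0 (pWord_ge_of_mem hθ hh _))
    have hsplit : pDoc m θ h x =
        (∏ i' ∈ ({i} : Finset (Fin m))ᶜ, pWord θ h (x i')) * pWord θ h (x i) := by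
      rw [pDoc, ← Finset.prod_compl_mul_prod ({i} : Finset (Fin m)), Finset.prod_singleton]
    rw [hsplit]
    have : (∏ i' ∈ ({i} : Finset (Fin m))ᶜ, pWord θ h (x i')) * pWord θ h (x i) *
        ((∑ k, h k * δ k (x i)) / pWord θ h (x i)) =
        (∏ i' ∈ ({i} : Finset (Fin m))ᶜ, pWord θ h (x i')) * ∑ k, h k * δ k (x i) := by
      field_simp
    rw [this, Finset.mul_sum]
    refine Finset.sum_congr rfl fun j _ => ?_
    simp only [hgdef]
    ring
  rw [integral_congr_ae heq,
    integral_finset_sum _ (fun i _ => integrable_finset_sum _ fun j _ => (hgint i j).const_mul _)]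
  refine Finset.sum_congr rfl fun i _ => ?_
  rw [integral_finset_sum _ fun j _ => (hgint i j).const_mul _]
  refine Finset.sum_congr rfl fun j _ => ?_
  rw [integral_const_mul, mul_comm]

end Aux


/-- **Proposition 2 (linear-system characterization of first-order identifiability).**
`𝔡_{m,1}(θ) > 0` if and only if the linear system
`Σ_{i=1}^m Σ_{j=1}^K ξ(i,j;θ,x) δ_{j,x_i} = 0` (for all `x ∈ [V]^m`) together with
`Σ_k δ_{jk} = 0` (for all `j`) has no non-zero solution `δ`. -/
theorem degen_one_pos_iff_linear_system
    {V K m : ℕ} (hV : 2 ≤ V) (hK : 2 ≤ K) (hm : 1 ≤ m) {c0 : ℝ} (hc0 : 0 < c0)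
    (ν0 : Measure (Fin K → ℝ)) (hprob : IsProbabilityMeasure ν0)
    (hsupp : ν0 (simplex K)ᶜ = 0)
    (θ : Fin K → Fin V → ℝ) (hθ : θ ∈ Theta c0 V K) :
    0 < degen ν0 m θ 1 ↔
      ∀ δ : Fin K → Fin V → ℝ,
        ((∀ x : Fin m → Fin V,
            ∑ i : Fin m, ∑ j : Fin K,
              (∫ h, h j * ∏ i' ∈ ({i} : Finset (Fin m))ᶜ, pWord θ h (x i') ∂ν0) *
                δ j (x i) = 0) ∧
          (∀ j : Fin K, ∑ k, δ j k = 0)) → δ = 0 := by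
  haveI := hprob
  classical
  set ξ : (Fin m → Fin V) → Fin m → Fin K → ℝ := fun x i j =>
    ∫ h, h j * ∏ i' ∈ ({i} : Finset (Fin m))ᶜ, pWord θ h (x i') ∂ν0 with hξ
  set G : (Fin K → Fin V → ℝ) → ℝ := fun δ =>
    ∑ x : Fin m → Fin V, |∑ i : Fin m, ∑ j : Fin K, ξ x i j * δ j (x i)| with hG
  have hF : ∀ δ : Fin K → Fin V → ℝ,
      (∑ x : Fin m → Fin V,
        |∫ h, pDoc m θ h x *
            ∑ S ∈ Finset.powersetCard 1 (Finset.univ : Finset (Fin m)),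
              ∏ i ∈ S, ((∑ k, h k * δ k (x i)) / pWord θ h (x i)) ∂ν0|) = G δ := by
    intro δ
    refine Finset.sum_congr rfl fun x _ => ?_
    rw [key_integral ν0 hsupp θ hθ hc0 δ x]
  set Sdeg : Set ℝ := {r : ℝ | ∃ δ : Fin K → Fin V → ℝ, norm1 δ = 1 ∧
      (∀ k, ∑ ℓ, δ k ℓ = 0) ∧
      r = ∑ x : Fin m → Fin V,
        |∫ h, pDoc m θ h x *
            ∑ S ∈ Finset.powersetCard 1 (Finset.univ : Finset (Fin m)),
              ∏ i ∈ S, ((∑ k, h k * δ k (x i)) / pWord θ h (x i)) ∂ν0|} with hSdeg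
  have hdeg : degen ν0 m θ 1 = sInf Sdeg := rfl
  have hbdd : BddBelow Sdeg := by
    refine ⟨0, fun r hr => ?_⟩
    obtain ⟨δ, -, -, hr⟩ := hr
    rw [hr]
    exact Finset.sum_nonneg fun _ _ => abs_nonneg _
  have hGnonneg : ∀ δ, 0 ≤ G δ := fun δ =>
    Finset.sum_nonneg fun _ _ => abs_nonneg _
  constructor
  · intro hpos δ hδ
    obtain ⟨h1, h2⟩ := hδ
    by_contra hδ0
    have hcne : norm1 δ ≠ 0 := fun h => hδ0 (norm1_eq_zero h)
    have hc : 0 < norm1 δ := lt_of_le_of_ne (norm1_nonneg δ) (Ne.symm hcne)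
    set δ' : Fin K → Fin V → ℝ := (norm1 δ)⁻¹ • δ with hδ'
    have hn : norm1 δ' = 1 := by
      rw [hδ', norm1_smul, abs_of_nonneg (inv_nonneg.2 hc.le), inv_mul_cancel₀ hcne]
    have hrows : ∀ j, ∑ ℓ, δ' j ℓ = 0 := by
      intro j
      have : ∑ ℓ, δ' j ℓ = (norm1 δ)⁻¹ * ∑ ℓ, δ j ℓ := by
        rw [Finset.mul_sum]
        exact Finset.sum_congr rfl fun ℓ _ => by simp [hδ', mul_comm]
      rw [this, h2 j, mul_zero]
    have hGδ' : G δ' = 0 := by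
      rw [hG]
      refine Finset.sum_eq_zero fun x _ => ?_
      have : ∑ i : Fin m, ∑ j : Fin K, ξ x i j * δ' j (x i) =
          (norm1 δ)⁻¹ * ∑ i : Fin m, ∑ j : Fin K, ξ x i j * δ j (x i) := by
        rw [Finset.mul_sum]
        refine Finset.sum_congr rfl fun i _ => ?_
        rw [Finset.mul_sum]
        refine Finset.sum_congr rfl fun j _ => ?_
        simp [hδ']
        ring
      rw [this, h1 x, mul_zero, abs_zero]
    have hmem : (0:ℝ) ∈ Sdeg := by
      refine ⟨δ', hn, hrows, ?_⟩
      rw [hF δ', hGδ']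
    have hle : sInf Sdeg ≤ 0 := csInf_le hbdd hmem
    rw [hdeg] at hpos
    linarith
  · intro hker
    -- nonempty witness in the constraint set
    set e0 : Fin V := ⟨0, by omega⟩ with he0
    set e1 : Fin V := ⟨1, by omega⟩ with he1
    have hne : e0 ≠ e1 := by
      simp [he0, he1, Fin.ext_iff]
    set k0 : Fin K := ⟨0, by omega⟩ with hk0
    set δ0 : Fin K → Fin V → ℝ := fun k ℓ =>
      if k = k0 then ((if ℓ = e0 then (1:ℝ)/2 else 0) - (if ℓ = e1 then (1:ℝ)/2 else 0))
      else 0 with hδ0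
    have hδ0rows : ∀ j, ∑ ℓ, δ0 j ℓ = 0 := by
      intro j
      by_cases hj : j = k0 <;>
        simp [hδ0, hj, Finset.sum_sub_distrib, Finset.sum_ite_eq']
    have hδ0norm : norm1 δ0 = 1 := by
      rw [norm1, Finset.sum_eq_single k0]
      · have hptwise : ∀ ℓ : Fin V, |δ0 k0 ℓ| =
            (if ℓ = e0 then (1:ℝ)/2 else 0) + (if ℓ = e1 then (1:ℝ)/2 else 0) := by
          intro ℓ
          simp only [hδ0, if_pos rfl]
          split_ifs with ha hb hb
          · exact absurd (ha.symm.trans hb) hne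
          · norm_num
          · norm_num
          · norm_num
        rw [Finset.sum_congr rfl fun ℓ _ => hptwise ℓ, Finset.sum_add_distrib,
          Finset.sum_ite_eq' Finset.univ e0, Finset.sum_ite_eq' Finset.univ e1]
        norm_num
      · intro k _ hk
        simp [hδ0, hk]
      · intro hk
        exact absurd (Finset.mem_univ k0) hk
    set C : Set (Fin K → Fin V → ℝ) :=
      {δ | norm1 δ = 1 ∧ ∀ j, ∑ ℓ, δ j ℓ = 0} with hCdef
    have hδ0C : δ0 ∈ C := ⟨hδ0norm, hδ0rows⟩
    have hcn : Continuous (norm1 : (Fin K → Fin V → ℝ) → ℝ) := by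
      unfold norm1
      exact continuous_finset_sum _ fun k _ => continuous_finset_sum _ fun ℓ _ =>
        (((continuous_apply ℓ).comp (continuous_apply k)).abs)
    have hC : IsCompact C := by
      rw [Metric.isCompact_iff_isClosed_bounded]
      constructor
      · have : C = {δ : Fin K → Fin V → ℝ | norm1 δ = 1} ∩
            ⋂ j : Fin K, {δ : Fin K → Fin V → ℝ | ∑ ℓ, δ j ℓ = 0} := by
          ext δ
          simp [hCdef, Set.mem_iInter]
        rw [this]
        exact (isClosed_eq hcn continuous_const).inter (isClosed_iInter fun j =>
          isClosed_eq (continuous_finset_sum _ fun ℓ _ =>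
            (continuous_apply ℓ).comp (continuous_apply j)) continuous_const)
      · refine Bornology.IsBounded.subset (Metric.isBounded_closedBall
          (x := (0 : Fin K → Fin V → ℝ)) (r := 1)) fun δ hδ => ?_
        rw [Metric.mem_closedBall, dist_zero_right,
          pi_norm_le_iff_of_nonneg zero_le_one]
        intro k
        rw [pi_norm_le_iff_of_nonneg zero_le_one]
        intro ℓ
        rw [Real.norm_eq_abs, ← hδ.1]
        exact abs_le_norm1 δ k ℓ
    have hGc : Continuous G := by
      rw [hG]
      exact continuous_finset_sum _ fun x _ => (continuous_finset_sum _ fun i _ =>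
        continuous_finset_sum _ fun j _ =>
          continuous_const.mul ((continuous_apply (x i)).comp (continuous_apply j))).abs
    obtain ⟨δm, hδmC, hmin⟩ := hC.exists_isMinOn ⟨δ0, hδ0C⟩ hGc.continuousOn
    have hGpos : 0 < G δm := by
      rcases lt_or_eq_of_le (hGnonneg δm) with h | h
      · exact h
      · exfalso
        have hzero : ∀ x : Fin m → Fin V,
            ∑ i : Fin m, ∑ j : Fin K, ξ x i j * δm j (x i) = 0 := by
          intro x
          have := (Finset.sum_eq_zero_iff_of_nonneg
            (fun (x : Fin m → Fin V) _ => abs_nonneg _)).1 h.symm x (Finset.mem_univ x)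
          exact abs_eq_zero.1 this
        have : δm = 0 := hker δm ⟨hzero, hδmC.2⟩
        rw [this] at hδmC
        have : norm1 (0 : Fin K → Fin V → ℝ) = 1 := hδmC.1
        simp [norm1] at this
    rw [hdeg]
    refine lt_of_lt_of_le hGpos (le_csInf ?_ ?_)
    · exact ⟨_, δ0, hδ0norm, hδ0rows, rfl⟩
    · rintro r ⟨δ, hn1, hrows, hr⟩
      rw [hr, hF δ]
      exact hmin ⟨hn1, hrows⟩


end TopicModel
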